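/- arXiv:2601.17193 — 5 statements merged into one kernel-verified Lean document; each statement's English description precedes it below -/
import Mathlib

section
/- Let f_\tau, b_\tau be sequences with 0 \le f_\tau \le \bar{f}, \underline{b} \le b_\tau \le \bar{b}, \underline{b} > 0, and let \rho_t = (\sum_{\tau=1}^{t-1} f_\tau)/(\sum_{\tau=1}^{t-1} b_\tau). Then for any stopping time \sigma \le T, the path length \sum_{t=1}^{\sigma-1} |\rho_{t+1} - \rho_t| \le C (\log T + 1), where C = (\bar{f}/\underline{b})(1 + \bar{b}/\underline{b}). -/
set_option maxHeartbeats 1000000 in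
/-- The path length of the rolling average sequence up to a stopping time
`σ ≤ T` is bounded by `C * (log T + 1)`. -/
theorem rolling_average_path_length_bound
    (f b : ℕ → ℝ) (fbar bl bbar : ℝ)
    (hfbar : 0 ≤ fbar) (hbl : 0 < bl) (hblbbar : bl ≤ bbar)
    (hf : ∀ τ, 0 ≤ f τ ∧ f τ ≤ fbar)
    (hb : ∀ τ, bl ≤ b τ ∧ b τ ≤ bbar)
    (ρ : ℕ → ℝ)
    (hρ : ∀ t,
      ρ t = (∑ τ ∈ Finset.Icc 1 (t - 1), f τ) / (∑ τ ∈ Finset.Icc 1 (t - 1), b τ))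
    (σ T : ℕ) (hσ : 2 ≤ σ) (hσT : σ ≤ T) :
    ∑ t ∈ Finset.Icc 1 (σ - 1), |ρ (t + 1) - ρ t| ≤
      (fbar / bl) * (1 + bbar / bl) * (Real.log T + 1) := by
  set C : ℝ := (fbar / bl) * (1 + bbar / bl) with hC
  have hbbar : 0 < bbar := lt_of_lt_of_le hbl hblbbar
  have hCnn : 0 ≤ C := by positivity
  -- basic facts about partial sums
  have hFnn : ∀ n, 0 ≤ ∑ τ ∈ Finset.Icc 1 n, f τ := fun n =>
    Finset.sum_nonneg fun τ _ => (hf τ).1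
  have hFub : ∀ n, ∑ τ ∈ Finset.Icc 1 n, f τ ≤ fbar * n := by
    intro n
    calc ∑ τ ∈ Finset.Icc 1 n, f τ ≤ ∑ τ ∈ Finset.Icc 1 n, fbar :=
          Finset.sum_le_sum fun τ _ => (hf τ).2
      _ = fbar * n := by rw [Finset.sum_const, Nat.card_Icc]; push_cast; ring
  have hBlb : ∀ n, bl * n ≤ ∑ τ ∈ Finset.Icc 1 n, b τ := by
    intro n
    calc bl * n = ∑ τ ∈ Finset.Icc 1 n, bl := by
          rw [Finset.sum_const, Nat.card_Icc]; push_cast; ring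
      _ ≤ ∑ τ ∈ Finset.Icc 1 n, b τ := Finset.sum_le_sum fun τ _ => (hb τ).1
  have hBpos : ∀ n : ℕ, 1 ≤ n → 0 < ∑ τ ∈ Finset.Icc 1 n, b τ := by
    intro n hn
    refine lt_of_lt_of_le ?_ (hBlb n)
    have : (1 : ℝ) ≤ (n : ℝ) := by exact_mod_cast hn
    nlinarith
  -- key per-term bound
  have key : ∀ t : ℕ, 1 ≤ t → |ρ (t + 1) - ρ t| ≤ C * (1 / t) := by
    intro t ht
    obtain ⟨m, rfl⟩ : ∃ m, t = m + 1 := ⟨t - 1, (Nat.succ_pred_eq_of_pos ht).symm⟩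
    have hsimp1 : (m + 1 + 1 : ℕ) - 1 = m + 1 := rfl
    have hsimp2 : (m + 1 : ℕ) - 1 = m := rfl
    set Fm := ∑ τ ∈ Finset.Icc 1 m, f τ with hFm
    set Bm := ∑ τ ∈ Finset.Icc 1 m, b τ with hBm
    have hsplitf : ∑ τ ∈ Finset.Icc 1 (m + 1), f τ = Fm + f (m + 1) :=
      Finset.sum_Icc_succ_top (Nat.le_add_left 1 m) f
    have hsplitb : ∑ τ ∈ Finset.Icc 1 (m + 1), b τ = Bm + b (m + 1) :=
      Finset.sum_Icc_succ_top (Nat.le_add_left 1 m) b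
    have hρ1 : ρ (m + 1 + 1) = (Fm + f (m + 1)) / (Bm + b (m + 1)) := by
      rw [hρ, hsimp1, hsplitf, hsplitb]
    have hρ2 : ρ (m + 1) = Fm / Bm := by rw [hρ, hsimp2]
    have hfm := hf (m + 1)
    have hbm := hb (m + 1)
    have hBt : 0 < Bm + b (m + 1) := by
      have := hBlb m
      have : (0:ℝ) ≤ Bm := le_trans (by positivity) this
      linarith [hbm.1, hbl]
    rcases Nat.eq_zero_or_pos m with hm0 | hm1
    · -- t = 1 : ρ 1 = 0
      subst hm0
      have hFm0 : Fm = 0 := by simp [hFm]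
      have hBm0 : Bm = 0 := by simp [hBm]
      have hb1 : 0 < b 1 := lt_of_lt_of_le hbl (hb 1).1
      rw [hρ1, hρ2, hFm0, hBm0]
      simp only [zero_add, zero_div, sub_zero, Nat.cast_one]
      rw [abs_of_nonneg (div_nonneg (hf 1).1 hb1.le), div_one, mul_one]
      have h1 : f 1 / b 1 ≤ fbar / bl := div_le_div₀ hfbar (hf 1).2 hbl (hb 1).1
      have h2 : fbar / bl ≤ C := by
        rw [hC]
        nlinarith [div_nonneg hfbar hbl.le, div_nonneg hbbar.le hbl.le]
      linarith
    · -- t = m + 1 ≥ 2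
      have hBmpos : 0 < Bm := hBpos m hm1
      have hmR : (1:ℝ) ≤ (m:ℝ) := by exact_mod_cast hm1
      rw [hρ1, hρ2, div_sub_div _ _ (ne_of_gt hBt) (ne_of_gt hBmpos)]
      have hnum : (Fm + f (m + 1)) * Bm - (Bm + b (m + 1)) * Fm
          = f (m + 1) * Bm - Fm * b (m + 1) := by ring
      rw [hnum, abs_div, abs_of_pos (mul_pos hBt hBmpos)]
      have habs : |f (m + 1) * Bm - Fm * b (m + 1)| ≤ f (m+1) * Bm + Fm * b (m+1) := by
        have h1 : f (m+1) * Bm - Fm * b (m+1) ≤ f (m+1) * Bm + Fm * b (m+1) := by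
          nlinarith [hFnn m, hbm.1, hbl]
        have h2 : -(f (m+1) * Bm + Fm * b (m+1)) ≤ f (m+1) * Bm - Fm * b (m+1) := by
          nlinarith [hfm.1, hBmpos.le]
        exact abs_le.mpr ⟨h2, h1⟩
      have step : (f (m+1) * Bm + Fm * b (m+1)) / ((Bm + b (m + 1)) * Bm)
          ≤ C * (1 / (m + 1 : ℕ)) := by
        have htR : (0:ℝ) < ((m:ℝ) + 1) := by linarith
        rw [div_le_iff₀ (mul_pos hBt hBmpos), hC]
        push_cast
        have e1 : (fbar / bl) * (1 + bbar / bl) * (1 / ((m:ℝ) + 1)) * ((Bm + b (m + 1)) * Bm)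
            = (fbar * (bl + bbar) * ((Bm + b (m + 1)) * Bm)) / (bl * bl * ((m:ℝ) + 1)) := by
          field_simp
        rw [e1, le_div_iff₀ (by positivity)]
        have hBtlb : bl * ((m:ℝ) + 1) ≤ Bm + b (m + 1) := by
          have h := hBlb (m + 1)
          rw [hsplitb] at h
          push_cast at h
          linarith
        have hBmlb : bl * (m:ℝ) ≤ Bm := by exact_mod_cast hBlb m
        have hFub' : Fm ≤ fbar * (m:ℝ) := by exact_mod_cast hFub m
        have hbnn : (0:ℝ) ≤ b (m + 1) := le_trans hbl.le hbm.1
        have k1 : f (m + 1) * (bl * ((m:ℝ) + 1)) ≤ fbar * (Bm + b (m + 1)) :=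
          mul_le_mul hfm.2 hBtlb (by positivity) hfbar
        have k2 : Fm * b (m + 1) ≤ (fbar * (m:ℝ)) * bbar :=
          mul_le_mul hFub' hbm.2 hbnn (by positivity)
        have k3 : (bl * ((m:ℝ) + 1)) * (bl * (m:ℝ)) ≤ (Bm + b (m + 1)) * Bm :=
          mul_le_mul hBtlb hBmlb (by positivity) hBt.le
        linarith [mul_le_mul_of_nonneg_right k1 (show (0:ℝ) ≤ bl * Bm by positivity),
          mul_le_mul_of_nonneg_right k2
            (show (0:ℝ) ≤ bl * bl * ((m:ℝ) + 1) by positivity),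
          mul_le_mul_of_nonneg_left k3 (show (0:ℝ) ≤ fbar * bbar by positivity)]
      calc |f (m + 1) * Bm - Fm * b (m + 1)| / ((Bm + b (m + 1)) * Bm)
          ≤ (f (m+1) * Bm + Fm * b (m+1)) / ((Bm + b (m + 1)) * Bm) :=
            (div_le_div_iff_of_pos_right (mul_pos hBt hBmpos)).mpr habs
        _ ≤ C * (1 / (m + 1 : ℕ)) := step
  -- sum the bound
  have hσ1 : 1 ≤ σ - 1 := by omega
  calc ∑ t ∈ Finset.Icc 1 (σ - 1), |ρ (t + 1) - ρ t|
      ≤ ∑ t ∈ Finset.Icc 1 (σ - 1), C * (1 / (t:ℝ)) := by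
        refine Finset.sum_le_sum fun t ht => ?_
        exact key t (Finset.mem_Icc.mp ht).1
    _ = C * ∑ t ∈ Finset.Icc 1 (σ - 1), ((t:ℝ))⁻¹ := by
        rw [Finset.mul_sum]; congr 1; ext t; rw [one_div]
    _ = C * (harmonic (σ - 1) : ℝ) := by
        rw [harmonic_eq_sum_Icc]; push_cast; ring
    _ ≤ C * (1 + Real.log (σ - 1 : ℕ)) := by
        exact mul_le_mul_of_nonneg_left (harmonic_le_one_add_log _) hCnn
    _ ≤ C * (Real.log T + 1) := by
        apply mul_le_mul_of_nonneg_left _ hCnn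
        have hlog : Real.log ((σ - 1 : ℕ) : ℝ) ≤ Real.log T := by
          apply Real.log_le_log (by exact_mod_cast hσ1)
          exact_mod_cast (by omega : σ - 1 ≤ T)
        linarith
end

section
/- Consider projected online gradient descent on a closed convex set K \subseteq \mathbb{R}^n with diameter bound D (i.e., \|x - y\| \le D for all x, y \in K, with D \ge 1) and convex differentiable losses f_t with \|\nabla f_t(x)\| \le G on K. With updates x_{t+1} = \Pi_K(x_t - \eta \nabla f_t(x_t)), for any comparator sequence u_1, \dots, u_T in K, the dynamic regret satisfies \sum_{t=1}^{T} (f_t(x_t) - f_t(u_t)) \le (5D^2/(2\eta)) \cdot P(u) + \eta T G^2 / 2, where P(u) = 1 + \sum_{t=1}^{T-1} \|u_{t+1} - u_t\|. -/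
open scoped RealInnerProductSpace

lemma ogd_grad_ineq {n : ℕ} {f : EuclideanSpace ℝ (Fin n) → ℝ}
    (hconv : ConvexOn ℝ Set.univ f) (hdiff : Differentiable ℝ f)
    (a b : EuclideanSpace ℝ (Fin n)) :
    ⟪gradient f a, b - a⟫ ≤ f b - f a := by
  set φ : ℝ → ℝ := f ∘ (AffineMap.lineMap a b) with hφ
  have hφconv : ConvexOn ℝ Set.univ φ := by
    simpa using hconv.comp_affineMap (AffineMap.lineMap a b)
  have hline : HasDerivAt (fun t : ℝ => (AffineMap.lineMap a b) t) (b - a) 0 := by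
    have h1 : HasDerivAt (fun t : ℝ => ((1:ℝ) - t) • a + t • b)
        ((-1 : ℝ) • a + (1 : ℝ) • b) 0 :=
      ((((hasDerivAt_id (0:ℝ)).const_sub 1).smul_const a).add
        ((hasDerivAt_id (0:ℝ)).smul_const b))
    have h2 : ((-1 : ℝ) • a + (1 : ℝ) • b) = b - a := by module
    rw [h2] at h1
    convert h1 using 2 with t
    simp [AffineMap.lineMap_apply_module]
  have hF : HasFDerivAt f (InnerProductSpace.toDual ℝ (EuclideanSpace ℝ (Fin n)) (gradient f a))
      ((AffineMap.lineMap a b : ℝ →ᵃ[ℝ] EuclideanSpace ℝ (Fin n)) (0:ℝ)) := by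
    simp only [AffineMap.lineMap_apply_zero]; exact (hdiff a).hasGradientAt
  have hd : HasDerivAt φ ⟪gradient f a, b - a⟫ 0 := by
    have := hF.comp_hasDerivAt 0 hline
    simpa [hφ, InnerProductSpace.toDual_apply_apply] using this
  have h := hφconv.le_slope_of_hasDerivAt (Set.mem_univ 0) (Set.mem_univ 1) zero_lt_one hd
  rw [slope_def_field] at h
  simp only [hφ, Function.comp_apply, AffineMap.lineMap_apply_one,
    AffineMap.lineMap_apply_zero, sub_zero, div_one] at h
  exact h

set_option maxHeartbeats 1000000 in
lemma ogd_proj {n : ℕ} {K : Set (EuclideanSpace ℝ (Fin n))} (hKconv : Convex ℝ K)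
    {y p : EuclideanSpace ℝ (Fin n)} (hp : p ∈ K)
    (hmin : ∀ z ∈ K, ‖p - y‖ ≤ ‖z - y‖) :
    ∀ w ∈ K, ‖p - w‖ ^ 2 ≤ ‖y - w‖ ^ 2 := by
  letI : Nonempty K := ⟨⟨p, hp⟩⟩
  have hbdd : BddBelow (Set.range fun w : K => ‖y - (w : EuclideanSpace ℝ (Fin n))‖) :=
    ⟨0, by rintro _ ⟨w, rfl⟩; exact norm_nonneg _⟩
  have hinf : ‖y - p‖ = ⨅ w : K, ‖y - w‖ := by
    apply le_antisymm
    · refine le_ciInf fun w => ?_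
      rw [norm_sub_rev y p, norm_sub_rev y (w : EuclideanSpace ℝ (Fin n))]
      exact hmin w w.2
    · exact ciInf_le hbdd ⟨p, hp⟩
  have hvar := (norm_eq_iInf_iff_real_inner_le_zero hKconv hp).mp hinf
  intro w hw
  have h1 := hvar w hw
  have h2 : ‖(y - p) - (w - p)‖ ^ 2 =
      ‖y - p‖ ^ 2 - 2 * ⟪y - p, w - p⟫ + ‖w - p‖ ^ 2 := norm_sub_sq_real _ _
  rw [sub_sub_sub_cancel_right] at h2
  have h3 : ‖p - w‖ = ‖w - p‖ := norm_sub_rev _ _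
  have h3sq : ‖p - w‖ ^ 2 = ‖w - p‖ ^ 2 := by rw [h3]
  nlinarith [sq_nonneg ‖y - p‖]

set_option maxHeartbeats 2000000 in
/-- Dynamic regret bound for projected online gradient descent:
`∑ (f t (x t) - f t (u t)) ≤ (5 D² / (2η)) · P(u) + η T G² / 2`,
where `P(u) = 1 + ∑ ‖u (t+1) - u t‖` is the path length of the comparator. -/
theorem ogd_dynamic_regret
    {n : ℕ} (K : Set (EuclideanSpace ℝ (Fin n)))
    (hK : K.Nonempty) (hKc : IsClosed K) (hKconv : Convex ℝ K)
    (D G η : ℝ) (hD : 1 ≤ D) (hη : 0 < η)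
    (hdiam : ∀ x ∈ K, ∀ y ∈ K, ‖x - y‖ ≤ D)
    (T : ℕ)
    (f : ℕ → EuclideanSpace ℝ (Fin n) → ℝ)
    (hconv : ∀ t, ConvexOn ℝ Set.univ (f t))
    (hdiff : ∀ t, Differentiable ℝ (f t))
    (hG : ∀ t, ∀ x ∈ K, ‖gradient (f t) x‖ ≤ G)
    (x u : ℕ → EuclideanSpace ℝ (Fin n))
    (hx1 : x 1 ∈ K)
    (hxK : ∀ t, x t ∈ K)
    (hu : ∀ t, u t ∈ K)
    (hupdate : ∀ t, 1 ≤ t →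
      x (t + 1) ∈ K ∧
      ∀ z ∈ K, ‖x (t + 1) - (x t - η • gradient (f t) (x t))‖ ≤
        ‖z - (x t - η • gradient (f t) (x t))‖) :
    ∑ t ∈ Finset.Icc 1 T, (f t (x t) - f t (u t)) ≤
      (5 * D ^ 2 / (2 * η)) * (1 + ∑ t ∈ Finset.Icc 1 (T - 1), ‖u (t + 1) - u t‖) +
        η * T * G ^ 2 / 2 := by
  have hG0 : 0 ≤ G := (norm_nonneg _).trans (hG 1 (x 1) hx1)
  have h2η : (0:ℝ) < 2 * η := by linarith
  -- per-step inequality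
  have step : ∀ t, 1 ≤ t →
      2*η*(f t (x t) - f t (u t)) + ‖x (t+1) - u t‖^2 ≤ ‖x t - u t‖^2 + η^2*G^2 := by
    intro t ht
    obtain ⟨hPK, hmin⟩ := hupdate t ht
    set g := gradient (f t) (x t) with hg
    set y := x t - η • g with hy
    have hproj := ogd_proj hKconv hPK (fun z hz => hmin z hz) (u t) (hu t)
    have hgi := ogd_grad_ineq (hconv t) (hdiff t) (x t) (u t)
    have hgn : ‖g‖ ≤ G := hG t (x t) (hxK t)
    have hexp : ‖y - u t‖^2 = ‖x t - u t‖^2 - 2*⟪x t - u t, η • g⟫ + ‖η • g‖^2 := by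
      have hrw : y - u t = (x t - u t) - η • g := by rw [hy]; abel
      rw [hrw]; exact norm_sub_sq_real _ _
    have hinner : ⟪x t - u t, η • g⟫ = -(η * ⟪g, u t - x t⟫) := by
      rw [real_inner_smul_right, real_inner_comm]
      have : (u t - x t) = -(x t - u t) := by abel
      rw [this, inner_neg_right]
      ring
    have hsm : ‖η • g‖^2 = η^2 * ‖g‖^2 := by
      rw [norm_smul, mul_pow, Real.norm_eq_abs, sq_abs]
    have hgsq : ‖g‖^2 ≤ G^2 := by nlinarith [norm_nonneg g]
    have hgg : η^2 * ‖g‖^2 ≤ η^2 * G^2 := mul_le_mul_of_nonneg_left hgsq (sq_nonneg η)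
    nlinarith [mul_le_mul_of_nonneg_left hgi (le_of_lt h2η)]
  -- main induction
  have main : ∀ T, 1 ≤ T →
      2*η*(∑ t ∈ Finset.Icc 1 T, (f t (x t) - f t (u t))) + ‖x (T+1) - u T‖^2 ≤
        ‖x 1 - u 1‖^2 + 3*D*(∑ t ∈ Finset.Icc 1 (T-1), ‖u (t+1) - u t‖) + η^2*(T:ℝ)*G^2 := by
    intro T hT
    induction T, hT using Nat.le_induction with
    | base =>
      simp only [Finset.Icc_self, Finset.sum_singleton, Nat.sub_self, Nat.cast_one]
      have hIcc : Finset.Icc 1 0 = (∅ : Finset ℕ) := by decide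
      rw [hIcc, Finset.sum_empty]
      have := step 1 le_rfl
      push_cast
      linarith
    | succ T hT ih =>
      obtain ⟨S, rfl⟩ : ∃ S, T = S + 1 := ⟨T - 1, by omega⟩
      have hstep := step (S + 2) (by omega)
      have hdrift : ‖x (S+2) - u (S+2)‖^2 ≤
          ‖x (S+2) - u (S+1)‖^2 + 3*D*‖u (S+2) - u (S+1)‖ := by
        have htri : ‖x (S+2) - u (S+2)‖ ≤ ‖x (S+2) - u (S+1)‖ + ‖u (S+1) - u (S+2)‖ :=
          norm_sub_le_norm_sub_add_norm_sub _ _ _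
        have hrev : ‖u (S+1) - u (S+2)‖ = ‖u (S+2) - u (S+1)‖ := norm_sub_rev _ _
        have hb1 : ‖x (S+2) - u (S+1)‖ ≤ D := hdiam _ (hxK _) _ (hu _)
        have hb2 : ‖u (S+2) - u (S+1)‖ ≤ D := hdiam _ (hu _) _ (hu _)
        nlinarith [norm_nonneg (x (S+2) - u (S+2)), norm_nonneg (x (S+2) - u (S+1)),
          norm_nonneg (u (S+2) - u (S+1))]
      have hsum1 : ∑ t ∈ Finset.Icc 1 (S+2), (f t (x t) - f t (u t)) =
          (∑ t ∈ Finset.Icc 1 (S+1), (f t (x t) - f t (u t))) +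
            (f (S+2) (x (S+2)) - f (S+2) (u (S+2))) :=
        Finset.sum_Icc_succ_top (by omega) _
      have hsum2 : ∑ t ∈ Finset.Icc 1 (S+1), ‖u (t+1) - u t‖ =
          (∑ t ∈ Finset.Icc 1 S, ‖u (t+1) - u t‖) + ‖u (S+2) - u (S+1)‖ :=
        Finset.sum_Icc_succ_top (by omega) _
      simp only [Nat.add_sub_cancel] at ih ⊢
      rw [hsum1, hsum2]
      push_cast at ih ⊢
      nlinarith [hstep, hdrift, ih]
  -- conclude
  rcases Nat.eq_zero_or_pos T with rfl | hT
  · have hIcc : Finset.Icc 1 0 = (∅ : Finset ℕ) := by decide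
    rw [hIcc]
    simp only [Finset.sum_empty, Nat.zero_sub, Nat.cast_zero]
    have : (0:ℝ) < 5 * D ^ 2 / (2 * η) := by positivity
    nlinarith
  · have hm := main T hT
    set S := ∑ t ∈ Finset.Icc 1 (T-1), ‖u (t+1) - u t‖ with hSdef
    have hS : 0 ≤ S := Finset.sum_nonneg fun _ _ => norm_nonneg _
    have hx1u : ‖x 1 - u 1‖ ≤ D := hdiam _ hx1 _ (hu 1)
    have hx1sq : ‖x 1 - u 1‖^2 ≤ D^2 := by nlinarith [norm_nonneg (x 1 - u 1)]
    refine le_of_mul_le_mul_left ?_ h2η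
    have hRHS : 2*η*((5 * D ^ 2 / (2 * η)) * (1 + S) + η * (T:ℝ) * G^2 / 2) =
        5*D^2*(1+S) + η^2*(T:ℝ)*G^2 := by
      field_simp
    rw [hRHS]
    have hterm : (0:ℝ) ≤ ‖x (T+1) - u T‖^2 := sq_nonneg _
    nlinarith [mul_nonneg hS (show (0:ℝ) ≤ 5*D^2 - 3*D by nlinarith)]
end

section
/- Let x_t maximize x \mapsto f_t(x) - \mu_t b_t(x) over \mathcal{X}_t, where the null action 0 \in \mathcal{X}_t satisfies f_t(0) \ge 0 and b_t(0) = \underline{b} > 0, and let x^*_t \in \mathcal{X}_t be arbitrary with b_t(x^*_t) \le \bar{b}. If \alpha \ge 1 satisfies \alpha \rho - (\alpha - 1)\underline{b} \ge \bar{b}, then for \mu_t \ge 0: \alpha f_t(x_t) \ge f_t(x^*_t) - \alpha \mu_t (\rho - b_t(x_t)). -/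
/-- Per-round competitive inequality for the opportunity cost policy with
calendar aging: if `x_t` maximizes `f_t(x) - μ_t·b_t(x)` over `𝒳_t`, which
contains a null action `z` with `f_t(z) ≥ 0` and `b_t(z) = b̲`, then for any
`x*_t ∈ 𝒳_t` with `b_t(x*_t) ≤ b̄` and `α ≥ 1` with `α·ρ - (α-1)·b̲ ≥ b̄`,
we have `α·f_t(x_t) ≥ f_t(x*_t) - α·μ_t·(ρ - b_t(x_t))`. -/
theorem per_round_competitive_inequality
    {A : Type*} (X : Set A) (f b : A → ℝ)
    (bl bbar ρ μ α : ℝ)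
    (hbl : 0 < bl) (hblbbar : bl ≤ bbar) (hρ : 0 < ρ) (hμ : 0 ≤ μ)
    (z : A) (hz : z ∈ X) (hfz : 0 ≤ f z) (hbz : b z = bl)
    (hbrange : ∀ x ∈ X, bl ≤ b x ∧ b x ≤ bbar)
    (hfnonneg : ∀ x ∈ X, 0 ≤ f x)
    (xt : A) (hxt : xt ∈ X)
    (hopt : ∀ x ∈ X, f x - μ * b x ≤ f xt - μ * b xt)
    (xstar : A) (hxstar : xstar ∈ X) (hbxstar : b xstar ≤ bbar)
    (hα1 : 1 ≤ α) (hα2 : α * ρ - (α - 1) * bl ≥ bbar) :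
    α * f xt ≥ f xstar - α * μ * (ρ - b xt) := by
  have h1 := hopt xstar hxstar
  have h2 := hopt z hz
  have h3 := (hbrange xt hxt).1
  have h4 : 0 ≤ f xt - μ * (b xt - bl) := by
    have := hbz ▸ h2; nlinarith
  have h5 : 0 ≤ (α - 1) * (f xt - μ * (b xt - bl)) :=
    mul_nonneg (by linarith) h4
  have h6 : 0 ≤ μ * (α * ρ - (α - 1) * bl - b xstar) :=
    mul_nonneg hμ (by linarith)
  nlinarith [h5, h6]
end

section
/- Suppose \bar{B}_{t-1} \le \bar{T}_{t-1}\bar{b}, the constraint (1+\epsilon)F_{1:t-1} + \epsilon l(\bar{B}_{t-1} - \bar{b} + \underline{b}) \ge F^A_{1:t-1} holds, F^A_t \ge l \underline{b}, and set F_{1:t} = F_{1:t-1} + F^A_t, F^A_{1:t} = F^A_{1:t-1} + F^A_t, \bar{T}_t = \bar{T}_{t-1} - 1. Then (1+\epsilon)F_{1:t} + \epsilon l \bar{b} \bar{T}_t \ge F^A_{1:t}. -/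
/-- Recursive feasibility (Case 2): transition into the resource-rich
endgame constraint when the algorithm follows the advice. -/
theorem recursive_feasibility_case2
    (ε l bl bbar F FA Bbar Tbar FAt : ℝ)
    (hε : 0 < ε) (hl : 0 ≤ l) (hbl : 0 < bl) (hblbbar : bl ≤ bbar)
    (hF : 0 ≤ F) (hFA : 0 ≤ FA) (hBbar : 0 ≤ Bbar) (hTbar : 1 ≤ Tbar)
    (hFAt : 0 ≤ FAt)
    (htime : Bbar ≤ Tbar * bbar)
    (hcons : (1 + ε) * F + ε * l * (Bbar - bbar + bl) ≥ FA)
    (hrate : FAt ≥ l * bl) :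
    (1 + ε) * (F + FAt) + ε * l * bbar * (Tbar - 1) ≥ FA + FAt := by
  nlinarith [mul_le_mul_of_nonneg_left htime hl, mul_le_mul_of_nonneg_left hrate hε.le,
    mul_le_mul_of_nonneg_left (mul_le_mul_of_nonneg_left htime hl) hε.le]
end

section
/- Suppose \beta_{t-1} > 0, \bar{B}_{t-1} \ge \bar{b}, the constraint (1+\epsilon)F_{1:t-1} + \epsilon l \bar{B}_{t-1} \ge F^A_{1:t-1} + u(\min\{\bar{b}, \bar{B}_{t-1}\} + \beta_{t-1}) holds, and the advice's action at time t satisfies 0 \le B^A_t \le \bar{b} and F^A_t \ge l B^A_t. Then after setting F_{1:t} = F_{1:t-1} + F^A_t, F^A_{1:t} = F^A_{1:t-1} + F^A_t, \bar{B}_t = \bar{B}_{t-1} - B^A_t, \beta_t = \beta_{t-1}, we have (1+\epsilon)F_{1:t} + \epsilon l \bar{B}_t \ge F^A_{1:t} + u(\min\{\bar{b}, \bar{B}_t\} + \beta_t). -/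
/-- Recursive feasibility (Case 3): when the algorithm has consumed more
than the advice (`β > 0`), following the advice preserves the leading
constraint. -/
theorem recursive_feasibility_case3
    (ε l u bbar F FA Bbar β FAt BAt : ℝ)
    (hε : 0 < ε) (hl : 0 ≤ l) (hlu : l ≤ u) (hbbar : 0 < bbar)
    (hβ : 0 < β) (hBbar : bbar ≤ Bbar)
    (hBAt : 0 ≤ BAt) (hBAtub : BAt ≤ bbar)
    (hrate : FAt ≥ l * BAt)
    (hcons : (1 + ε) * F + ε * l * Bbar ≥ FA + u * (min bbar Bbar + β)) :
    (1 + ε) * (F + FAt) + ε * l * (Bbar - BAt) ≥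
      (FA + FAt) + u * (min bbar (Bbar - BAt) + β) := by
  have hmin : min bbar (Bbar - BAt) ≤ min bbar Bbar := by
    apply min_le_min le_rfl; linarith
  have hu : 0 ≤ u := le_trans hl hlu
  nlinarith [mul_le_mul_of_nonneg_left hmin hu, mul_le_mul_of_nonneg_left hrate hε.le]
end
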